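/- Let G be a connected weighted graph on n ≥ 3 vertices with Fiedler value λ_2(G) and Fiedler vector Y, and suppose W = {v : Y(v) = 0} is nonempty. Let H be a connected component of G − W and let E* be the largest external cost of a vertex of H (sum of weights of edges from that vertex to vertices outside H). If E* ≤ λ_2(G) − τ for some τ > 0, then the Fiedler value of H is at least τ. -/

import Mathlib

open Matrix

/-- The sorted (nondecreasing) list of eigenvalues of a Hermitian real matrix,
counted with multiplicity. -/
noncomputable def eigList {m : Type*} [Fintype m] [DecidableEq m]
    {A : Matrix m m ℝ} (hA : A.IsHermitian) : List ℝ :=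
  (Finset.univ.val.map hA.eigenvalues).sort (· ≤ ·)

/-- The `k`-th smallest eigenvalue (0-indexed) of a Hermitian real matrix. -/
noncomputable def eigNth {m : Type*} [Fintype m] [DecidableEq m]
    {A : Matrix m m ℝ} (hA : A.IsHermitian) (k : ℕ) : ℝ :=
  (eigList hA).getD k 0

/-- The Laplacian matrix of the weighted graph with weight matrix `W`. -/
noncomputable def lap {m : Type*} [Fintype m] [DecidableEq m]
    (W : Matrix m m ℝ) : Matrix m m ℝ :=
  fun i j => if i = j then ∑ k, W i k else -W i j

/-- The weight matrix of the subgraph induced on the vertex set `H`. -/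
noncomputable def subW {n : ℕ} (W : Matrix (Fin n) (Fin n) ℝ) (H : Finset (Fin n)) :
    Matrix {v : Fin n // v ∈ H} {v : Fin n // v ∈ H} ℝ :=
  fun v u => W v.1 u.1

lemma exists_sorted_equiv {m : Type*} [Fintype m] [DecidableEq m]
    {A : Matrix m m ℝ} (hA : A.IsHermitian) :
    ∃ e : Fin (Fintype.card m) ≃ m, Monotone (fun k => hA.eigenvalues (e k)) ∧
      ∀ k : Fin (Fintype.card m), eigNth hA k = hA.eigenvalues (e k) := by
  classical
  set N := Fintype.card m with hN
  let e₀ : Fin N ≃ m := (Fintype.equivFin m).symm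
  let f : Fin N → ℝ := fun k => hA.eigenvalues (e₀ k)
  let σ := Tuple.sort f
  refine ⟨σ.trans e₀, Tuple.monotone_sort f, ?_⟩
  have hmult : ((List.ofFn (f ∘ σ)) : Multiset ℝ) = Finset.univ.val.map hA.eigenvalues := by
    have h1 : ((List.ofFn (f ∘ σ)) : Multiset ℝ) = ((List.ofFn f) : Multiset ℝ) :=
      Multiset.coe_eq_coe.2 ((Tuple.sort f).ofFn_comp_perm f)
    rw [h1, List.ofFn_eq_map, ← Multiset.map_coe]
    have h2 : ((List.finRange N : List (Fin N)) : Multiset (Fin N)) = Finset.univ.val := rfl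
    rw [h2]
    have h3 : (Finset.univ.val : Multiset m) = Multiset.map e₀ Finset.univ.val := by
      have := Finset.map_univ_equiv e₀
      rw [← this, Finset.map_val]
      rfl
    rw [h3, Multiset.map_map]
    rfl
  have heq : eigList hA = List.ofFn (f ∘ σ) := by
    refine List.Perm.eq_of_pairwise' (r := (· ≤ ·)) ?_ ?_ ?_
    · exact Multiset.pairwise_sort _ _
    · exact List.pairwise_ofFn.2 fun i j hij => Tuple.monotone_sort f hij.le
    · exact Multiset.coe_eq_coe.1 (by rw [hmult]; exact (Multiset.sort_eq _ _))
  intro k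
  rw [eigNth, heq, List.getD_eq_getElem _ _ (by simp), List.getElem_ofFn]
  simp [Equiv.trans, f, σ]

lemma expand_aux {m : Type*} [Fintype m] [DecidableEq m]
    {A : Matrix m m ℝ} (hA : A.IsHermitian) (x : m → ℝ) (k : m) :
    x k = ∑ i, (⇑(hA.eigenvectorBasis i) ⬝ᵥ x) * (hA.eigenvectorBasis i) k := by
  set B := hA.eigenvectorBasis
  have h : (∑ i, (inner ℝ (B i) (WithLp.toLp 2 x) : ℝ) • B i) k = x k :=
    congrArg (fun y : EuclideanSpace ℝ m => y k) (B.sum_repr' (WithLp.toLp 2 x))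
  rw [← h]
  show (∑ i, (inner ℝ (B i) (WithLp.toLp 2 x) : ℝ) • B i) k = _
  rw [WithLp.ofLp_sum, Finset.sum_apply]
  refine Finset.sum_congr rfl fun i _ => ?_
  rw [PiLp.smul_apply, smul_eq_mul, PiLp.inner_apply]
  simp [dotProduct, mul_comm]

lemma spectral_gap {m : Type*} [Fintype m] [DecidableEq m] {A : Matrix m m ℝ}
    (hA : A.IsHermitian) (hpsd : ∀ x : m → ℝ, 0 ≤ x ⬝ᵥ (A *ᵥ x))
    (u : m → ℝ) (hu : u ≠ 0) (hAu : A *ᵥ u = 0)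
    (hker : ∀ x : m → ℝ, A *ᵥ x = 0 → ∃ c : ℝ, x = c • u) :
    (∀ x : m → ℝ, u ⬝ᵥ x = 0 → eigNth hA 1 * (x ⬝ᵥ x) ≤ x ⬝ᵥ (A *ᵥ x)) ∧
    (2 ≤ Fintype.card m →
      ∃ z : m → ℝ, z ≠ 0 ∧ u ⬝ᵥ z = 0 ∧ A *ᵥ z = eigNth hA 1 • z) := by
  classical
  set v : m → m → ℝ := fun i => ⇑(hA.eigenvectorBasis i) with hv
  set lam : m → ℝ := hA.eigenvalues with hlam
  have hvA : ∀ i, A *ᵥ v i = lam i • v i := hA.mulVec_eigenvectorBasis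
  have hvv : ∀ i j, v i ⬝ᵥ v j = if i = j then 1 else 0 := by
    intro i j
    have := orthonormal_iff_ite.1 hA.eigenvectorBasis.orthonormal i j
    rw [PiLp.inner_apply] at this
    simpa [dotProduct, hv, mul_comm] using this
  have hexp : ∀ (x : m → ℝ) k, x k = ∑ i, (v i ⬝ᵥ x) * v i k := fun x k => expand_aux hA x k
  have hAt : Aᵀ = A := by
    ext i j
    conv_rhs => rw [← hA.eq]
    simp [conjTranspose_apply, transpose_apply]
  have hdot : ∀ x y : m → ℝ, x ⬝ᵥ y = ∑ i, (v i ⬝ᵥ x) * (v i ⬝ᵥ y) := by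
    intro x y
    calc x ⬝ᵥ y = ∑ k, (∑ i, (v i ⬝ᵥ x) * v i k) * y k := by
          refine Finset.sum_congr rfl fun k _ => ?_
          rw [← hexp x k]
      _ = ∑ k, ∑ i, (v i ⬝ᵥ x) * v i k * y k := by
          refine Finset.sum_congr rfl fun k _ => Finset.sum_mul ..
      _ = ∑ i, ∑ k, (v i ⬝ᵥ x) * v i k * y k := Finset.sum_comm
      _ = ∑ i, (v i ⬝ᵥ x) * (v i ⬝ᵥ y) := by
          refine Finset.sum_congr rfl fun i _ => ?_
          rw [show v i ⬝ᵥ y = ∑ k, v i k * y k from rfl, Finset.mul_sum]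
          exact Finset.sum_congr rfl fun k _ => by ring
  have hsymdot : ∀ (i : m) (x : m → ℝ), v i ⬝ᵥ (A *ᵥ x) = lam i * (v i ⬝ᵥ x) := by
    intro i x
    rw [dotProduct_mulVec, ← hAt, vecMul_transpose, hvA, smul_dotProduct]
    rfl
  have hlamnn : ∀ i, 0 ≤ lam i := by
    intro i
    have h1 : v i ⬝ᵥ (A *ᵥ v i) = lam i := by
      rw [hsymdot, hvv, if_pos rfl, mul_one]
    rw [← h1]; exact hpsd (v i)
  obtain ⟨i₀, hd0⟩ : ∃ i, v i ⬝ᵥ u ≠ 0 := by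
    by_contra hcon
    push_neg at hcon
    apply hu
    funext k
    rw [show (0 : m → ℝ) k = 0 from rfl, hexp u k]
    exact Finset.sum_eq_zero fun i _ => by rw [hcon i, zero_mul]
  have hlami₀ : lam i₀ = 0 := by
    have h := hsymdot i₀ u
    rw [hAu, dotProduct_zero] at h
    rcases mul_eq_zero.1 h.symm with h1 | h1
    · exact h1
    · exact absurd h1 hd0
  obtain ⟨c₀, hc₀⟩ := hker (v i₀) (by rw [hvA, hlami₀, zero_smul])
  have hone : c₀ * (c₀ * (u ⬝ᵥ u)) = 1 := by
    have h := hvv i₀ i₀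
    rw [if_pos rfl, hc₀, smul_dotProduct, dotProduct_smul] at h
    simpa using h
  have hc₀ne : c₀ ≠ 0 := by
    rintro rfl; rw [zero_mul] at hone; exact zero_ne_one hone
  have huniq : ∀ j, lam j = 0 → j = i₀ := by
    intro j hj
    by_contra hne
    obtain ⟨cj, hcj⟩ := hker (v j) (by rw [hvA, hj, zero_smul])
    have h0 : v j ⬝ᵥ v i₀ = 0 := by rw [hvv, if_neg hne]
    have h1 : v j ⬝ᵥ v j = (1 : ℝ) := by rw [hvv, if_pos rfl]
    rw [hcj, hc₀, smul_dotProduct, dotProduct_smul] at h0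
    rw [hcj, smul_dotProduct, dotProduct_smul, smul_eq_mul, smul_eq_mul] at h1
    rw [smul_eq_mul, smul_eq_mul] at h0
    nlinarith [hone]
  obtain ⟨e, hmono, hnth⟩ := exists_sorted_equiv hA
  have hNpos : 0 < Fintype.card m := Fintype.card_pos_iff.2 ⟨i₀⟩
  have he0 : e ⟨0, hNpos⟩ = i₀ := by
    apply huniq
    have h1 : lam (e ⟨0, hNpos⟩) ≤ lam (e (e.symm i₀)) :=
      hmono (by simp [Fin.le_def])
    rw [e.apply_symm_apply, hlami₀] at h1
    exact le_antisymm h1 (hlamnn _)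
  constructor
  · intro x hx
    set c : m → ℝ := fun i => v i ⬝ᵥ x with hc
    have hci₀ : c i₀ = 0 := by
      show v i₀ ⬝ᵥ x = 0
      rw [hc₀, smul_dotProduct, hx, smul_eq_mul, mul_zero]
    have key : ∀ i, eigNth hA 1 * (c i * c i) ≤ lam i * (c i * c i) := by
      intro i
      rcases eq_or_ne i i₀ with rfl | hne
      · rw [hci₀]; simp
      · have hs0 : e.symm i ≠ ⟨0, hNpos⟩ := fun hcon =>
          hne (by rw [← e.apply_symm_apply i, hcon, he0])
        have hspos : 0 < (e.symm i).val :=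
          Nat.pos_of_ne_zero (fun h0 => hs0 (Fin.ext h0))
        have h2 : (1 : ℕ) < Fintype.card m := lt_of_le_of_lt hspos (e.symm i).isLt
        have h3 : eigNth hA 1 ≤ lam i := by
          rw [hnth ⟨1, h2⟩]
          have hle : (⟨1, h2⟩ : Fin (Fintype.card m)) ≤ e.symm i := by
            simp only [Fin.le_def]; exact hspos
          have h4 := hmono hle
          simp only [e.apply_symm_apply] at h4
          exact h4
        exact mul_le_mul_of_nonneg_right h3 (mul_self_nonneg _)
    calc eigNth hA 1 * (x ⬝ᵥ x) = ∑ i, eigNth hA 1 * (c i * c i) := by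
          rw [hdot x x, Finset.mul_sum]
      _ ≤ ∑ i, lam i * (c i * c i) := Finset.sum_le_sum fun i _ => key i
      _ = x ⬝ᵥ (A *ᵥ x) := by
          rw [hdot x (A *ᵥ x)]
          refine (Finset.sum_congr rfl fun i _ => ?_).symm
          rw [hsymdot]; ring
  · intro hcard2
    have h2 : (1 : ℕ) < Fintype.card m := hcard2
    refine ⟨v (e ⟨1, h2⟩), ?_, ?_, ?_⟩
    · intro h0
      have h := hvv (e ⟨1, h2⟩) (e ⟨1, h2⟩)
      rw [if_pos rfl, h0, zero_dotProduct] at h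
      exact zero_ne_one h
    · have hne : i₀ ≠ e ⟨1, h2⟩ := by
        rw [← he0]
        intro hcon
        have := e.injective hcon
        simp [Fin.ext_iff] at this
      have h0 : v i₀ ⬝ᵥ v (e ⟨1, h2⟩) = 0 := by rw [hvv, if_neg hne]
      rw [hc₀, smul_dotProduct, smul_eq_mul] at h0
      rcases mul_eq_zero.1 h0 with h | h
      · exact absurd h hc₀ne
      · exact h
    · rw [hvA, hnth ⟨1, h2⟩]

variable {m : Type*} [Fintype m] [DecidableEq m]

lemma lap_mulVec (W : Matrix m m ℝ) (hd : ∀ i, W i i = 0) (x : m → ℝ) (i : m) :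
    (lap W *ᵥ x) i = (∑ k, W i k) * x i - ∑ j, W i j * x j := by
  show ∑ j, lap W i j * x j = _
  have h : ∀ j, lap W i j * x j
      = (if i = j then (∑ k, W i k) * x i else 0) - W i j * x j := by
    intro j
    by_cases h : i = j
    · subst h; simp [lap, hd i]
    · simp [lap, h]
  rw [Finset.sum_congr rfl fun j _ => h j, Finset.sum_sub_distrib]
  simp

lemma lap_mulVec_ones (W : Matrix m m ℝ) (hd : ∀ i, W i i = 0) :
    lap W *ᵥ (fun _ => (1 : ℝ)) = 0 := by
  funext i
  rw [show (0 : m → ℝ) i = 0 from rfl, lap_mulVec W hd]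
  simp

lemma lap_quad (W : Matrix m m ℝ) (hsym : ∀ i j, W i j = W j i) (hd : ∀ i, W i i = 0)
    (x : m → ℝ) :
    2 * (x ⬝ᵥ (lap W *ᵥ x)) = ∑ i, ∑ j, W i j * (x i - x j)^2 := by
  have hT : ∑ i, ∑ j, W i j * (x j)^2 = ∑ i, ∑ j, W i j * (x i)^2 := by
    rw [Finset.sum_comm]
    refine Finset.sum_congr rfl fun i _ => Finset.sum_congr rfl fun j _ => by rw [hsym]
  have hq : x ⬝ᵥ (lap W *ᵥ x)
      = ∑ i, ∑ j, (W i j * (x i)^2 - W i j * x i * x j) := by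
    rw [dotProduct]
    refine Finset.sum_congr rfl fun i _ => ?_
    rw [lap_mulVec W hd, Finset.sum_mul, mul_sub, Finset.mul_sum, Finset.mul_sum,
      ← Finset.sum_sub_distrib]
    exact Finset.sum_congr rfl fun j _ => by ring
  rw [hq]
  have expand : ∀ i j, W i j * (x i - x j)^2
      = (W i j * (x i)^2) + (W i j * (x j)^2) - 2 * (W i j * x i * x j) := fun i j => by ring
  rw [Finset.sum_congr rfl fun i _ => Finset.sum_congr rfl fun j (_ : j ∈ Finset.univ) => expand i j]
  simp only [Finset.sum_sub_distrib, Finset.sum_add_distrib, ← Finset.mul_sum]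
  rw [hT]
  ring

lemma lap_psd (W : Matrix m m ℝ) (hsym : ∀ i j, W i j = W j i)
    (hnn : ∀ i j, 0 ≤ W i j) (hd : ∀ i, W i i = 0) (x : m → ℝ) :
    0 ≤ x ⬝ᵥ (lap W *ᵥ x) := by
  have h := lap_quad W hsym hd x
  have h2 : 0 ≤ ∑ i, ∑ j, W i j * (x i - x j)^2 :=
    Finset.sum_nonneg fun i _ => Finset.sum_nonneg fun j _ =>
      mul_nonneg (hnn i j) (sq_nonneg _)
  linarith

lemma lap_ker (W : Matrix m m ℝ) (hsym : ∀ i j, W i j = W j i)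
    (hnn : ∀ i j, 0 ≤ W i j) (hd : ∀ i, W i i = 0)
    (hconn : (SimpleGraph.fromRel fun i j => 0 < W i j).Connected)
    (x : m → ℝ) (hx : lap W *ᵥ x = 0) : ∃ c : ℝ, x = fun _ => c := by
  have hq : ∑ i, ∑ j, W i j * (x i - x j)^2 = 0 := by
    rw [← lap_quad W hsym hd x, hx, dotProduct_zero, mul_zero]
  have hterm : ∀ i ∈ Finset.univ, ∀ j ∈ Finset.univ, W i j * (x i - x j)^2 = 0 := by
    have houter := (Finset.sum_eq_zero_iff_of_nonneg (fun i _ =>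
      Finset.sum_nonneg fun j _ => mul_nonneg (hnn i j) (sq_nonneg _))).1 hq
    intro i hi j hj
    exact (Finset.sum_eq_zero_iff_of_nonneg (fun j _ =>
      mul_nonneg (hnn i j) (sq_nonneg _))).1 (houter i hi) j hj
  have hadj : ∀ i j, 0 < W i j → x i = x j := by
    intro i j hw
    have h0 := hterm i (Finset.mem_univ i) j (Finset.mem_univ j)
    rcases mul_eq_zero.1 h0 with h | h
    · exact absurd h (ne_of_gt hw)
    · have := pow_eq_zero_iff (n := 2) (by norm_num) |>.1 h
      linarith [sub_eq_zero.1 this]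
  have key : ∀ a b : m, (SimpleGraph.fromRel fun i j => 0 < W i j).Reachable a b →
      x a = x b := by
    intro a b hr
    obtain ⟨w⟩ := hr
    induction w with
    | nil => rfl
    | cons h p ih =>
      rename_i a' b' c' _
      refine Eq.trans ?_ ih
      rw [SimpleGraph.fromRel_adj] at h
      rcases h.2 with hw | hw
      · exact hadj _ _ hw
      · exact (hadj _ _ hw).symm
  obtain ⟨i₀⟩ := hconn.nonempty
  exact ⟨x i₀, funext fun v => key v i₀ (hconn.preconnected v i₀)⟩

/-- let `G` be a connected weighted graph on `n ≥ 3` vertices with Fiedler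
value `λ₂ = eigNth hL 1` and Fiedler vector `Y`, with nonempty zero set
`W = {v | Y v = 0}`, and let `H` be a connected component of `G − W`.  If the largest
external cost of a vertex of `H` is at most `λ₂(G) − τ` with `τ > 0`, then the Fiedler
value of the induced subgraph on `H` is at least `τ`. -/
theorem fiedler_of_component_of_zero_set_deletion_ge
    {n : ℕ} (hn : 3 ≤ n) (A : Matrix (Fin n) (Fin n) ℝ)
    (hsym : ∀ i j, A i j = A j i) (hnonneg : ∀ i j, 0 ≤ A i j)
    (hdiag : ∀ i, A i i = 0)
    (hconn : (SimpleGraph.fromRel fun i j => 0 < A i j).Connected)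
    (hL : (lap A).IsHermitian)
    (Y : Fin n → ℝ) (hY : Y ≠ 0) (hEig : lap A *ᵥ Y = eigNth hL 1 • Y)
    (hW : ∃ v, Y v = 0)
    (H : Finset (Fin n)) (hHne : H.Nonempty)
    (hHZ : ∀ v ∈ H, Y v ≠ 0)
    (hHclosed : ∀ v ∈ H, ∀ u ∉ H, Y u ≠ 0 → A v u = 0)
    (hHconn : ((SimpleGraph.fromRel fun i j => 0 < A i j).induce
      (↑H : Set (Fin n))).Connected)
    (hLapH : (lap (subW A H)).IsHermitian)
    (τ : ℝ) (hτ : 0 < τ)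
    (hext : ∀ s ∈ H, ∑ t ∈ Hᶜ, A s t ≤ eigNth hL 1 - τ) :
    τ ≤ eigNth hLapH 1 := by
  classical
  set lam2 := eigNth hL 1 with hlam2
  have hones : (fun _ : Fin n => (1:ℝ)) ≠ 0 := by
    intro h
    have := congrFun h ⟨0, by omega⟩
    simp at this
  have hkerA : ∀ x : Fin n → ℝ, lap A *ᵥ x = 0 →
      ∃ c : ℝ, x = c • (fun _ : Fin n => (1:ℝ)) := by
    intro x hx
    obtain ⟨c, hc⟩ := lap_ker A hsym hnonneg hdiag hconn x hx
    exact ⟨c, by rw [hc]; funext v; simp⟩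
  obtain ⟨specA, -⟩ := spectral_gap hL (fun x => lap_psd A hsym hnonneg hdiag x)
    (fun _ => 1) hones (lap_mulVec_ones A hdiag) hkerA
  have hsymH : ∀ i j, subW A H i j = subW A H j i := fun i j => hsym _ _
  have hnnH : ∀ i j, 0 ≤ subW A H i j := fun i j => hnonneg _ _
  have hdH : ∀ i, subW A H i i = 0 := fun i => hdiag _
  have hconnH : (SimpleGraph.fromRel
      fun i j : {v : Fin n // v ∈ H} => 0 < subW A H i j).Connected := by
    have heq : (SimpleGraph.fromRel fun i j : Fin n => 0 < A i j).induce (↑H : Set (Fin n))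
        = SimpleGraph.fromRel (fun i j : {v : Fin n // v ∈ H} => 0 < subW A H i j) := by
      ext a b
      simp only [SimpleGraph.comap_adj, SimpleGraph.fromRel_adj, subW,
        Function.Embedding.coe_subtype]
      constructor
      · rintro ⟨hne, h⟩
        exact ⟨fun hc => hne (congrArg _ hc), h⟩
      · rintro ⟨hne, h⟩
        exact ⟨fun hc => hne (Subtype.ext hc), h⟩
    exact heq ▸ hHconn
  have hHne' : Nonempty {v : Fin n // v ∈ H} := ⟨⟨hHne.choose, hHne.choose_spec⟩⟩
  have honesH : (fun _ : {v : Fin n // v ∈ H} => (1:ℝ)) ≠ 0 := by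
    intro h
    have := congrFun h (Classical.arbitrary _)
    simp at this
  have hkerH : ∀ x : {v : Fin n // v ∈ H} → ℝ, lap (subW A H) *ᵥ x = 0 →
      ∃ c : ℝ, x = c • (fun _ : {v : Fin n // v ∈ H} => (1:ℝ)) := by
    intro x hx
    obtain ⟨c, hc⟩ := lap_ker (subW A H) hsymH hnnH hdH hconnH x hx
    exact ⟨c, by rw [hc]; funext v; simp⟩
  have hrow : ∀ s ∈ H, ∑ j, A s j * Y j = ∑ j ∈ H, A s j * Y j := by
    intro s hs
    refine (Finset.sum_subset (Finset.subset_univ H) fun j _ hj => ?_).symm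
    by_cases hYj : Y j = 0
    · rw [hYj, mul_zero]
    · rw [hHclosed s hs j hj hYj, zero_mul]
  have heig : ∀ s : Fin n, (∑ k, A s k) * Y s - ∑ j, A s j * Y j = lam2 * Y s := by
    intro s
    have h := congrFun hEig s
    rw [lap_mulVec A hdiag Y s] at h
    rw [h]
    simp [hlam2]
  have hsplit : ∀ s : Fin n, ∑ k, A s k = ∑ k ∈ H, A s k + ∑ k ∈ Hᶜ, A s k :=
    fun s => (Finset.sum_add_sum_compl H _).symm
  have hcard : 2 ≤ H.card := by
    by_contra hc
    have h1 : H.card = 1 := by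
      have := Finset.card_pos.2 hHne
      omega
    obtain ⟨s, hsH⟩ := Finset.card_eq_one.1 h1
    subst hsH
    have hs : s ∈ ({s} : Finset (Fin n)) := Finset.mem_singleton_self s
    have h2 := heig s
    rw [hrow s hs, Finset.sum_singleton, hdiag s, zero_mul, sub_zero] at h2
    have hEs : ∑ k, A s k = lam2 := mul_right_cancel₀ (hHZ s hs) h2
    have h3 := hext s hs
    have h4 : ∑ t ∈ ({s}ᶜ : Finset (Fin n)), A s t = ∑ k, A s k := by
      rw [hsplit s, Finset.sum_singleton, hdiag, zero_add]
    rw [h4, hEs] at h3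
    linarith
  have hcardH : 2 ≤ Fintype.card {v : Fin n // v ∈ H} := by
    rw [Fintype.card_coe]; exact hcard
  obtain ⟨-, specH⟩ := spectral_gap hLapH (fun x => lap_psd _ hsymH hnnH hdH x)
    (fun _ => 1) honesH (lap_mulVec_ones _ hdH) hkerH
  obtain ⟨z, hz0, hzperp, hzeig⟩ := specH hcardH
  by_contra hlt
  push_neg at hlt
  set μ := eigNth hLapH 1 with hμ
  set x : Fin n → ℝ := fun v => if h : v ∈ H then z ⟨v, h⟩ else 0 with hx
  have hxH : ∀ (i : {v : Fin n // v ∈ H}), x ↑i = z i := fun i => dif_pos i.2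
  have hxnot : ∀ v, v ∉ H → x v = 0 := fun v hv => dif_neg hv
  have hsum1 : ∀ f : Fin n → ℝ, (∀ v ∉ H, f v = 0) →
      ∑ v, f v = ∑ i : {v : Fin n // v ∈ H}, f ↑i := by
    intro f hf
    rw [← Finset.sum_subset (Finset.subset_univ H) (fun v _ hv => hf v hv)]
    exact (Finset.sum_coe_sort H f).symm
  have hperp : (fun _ : Fin n => (1:ℝ)) ⬝ᵥ x = 0 := by
    rw [dotProduct] at hzperp ⊢
    simp only [one_mul] at hzperp ⊢
    rw [hsum1 x (fun v hv => hxnot v hv)]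
    rw [← hzperp]
    exact Finset.sum_congr rfl fun i _ => hxH i
  have hxx : x ⬝ᵥ x = z ⬝ᵥ z := by
    rw [dotProduct, dotProduct,
      hsum1 (fun v => x v * x v) (fun v hv => by show x v * x v = 0; rw [hxnot v hv, mul_zero])]
    exact Finset.sum_congr rfl fun i _ => by rw [hxH]
  have hzz : 0 < z ⬝ᵥ z := by
    rcases Function.ne_iff.1 hz0 with ⟨i, hi⟩
    have hi' : (0:ℝ) < z i * z i := mul_self_pos.2 hi
    exact Finset.sum_pos' (fun j _ => mul_self_nonneg _) ⟨i, Finset.mem_univ i, hi'⟩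
  have hinner : ∀ i : {v : Fin n // v ∈ H},
      ∑ j, A ↑i j * x j = ∑ j : {v : Fin n // v ∈ H}, subW A H i j * z j := by
    intro i
    rw [hsum1 (fun j => A ↑i j * x j) (fun j hj => by show A ↑i j * x j = 0; rw [hxnot j hj, mul_zero])]
    exact Finset.sum_congr rfl fun j _ => by rw [hxH]; rfl
  have hrowsum : ∀ i : {v : Fin n // v ∈ H},
      ∑ k, A ↑i k = (∑ k : {v : Fin n // v ∈ H}, subW A H i k) + ∑ t ∈ Hᶜ, A ↑i t := by
    intro i
    rw [hsplit ↑i]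
    congr 1
    exact (Finset.sum_coe_sort H (fun k => A ↑i k)).symm
  have hquad : x ⬝ᵥ (lap A *ᵥ x) = z ⬝ᵥ (lap (subW A H) *ᵥ z)
      + ∑ i : {v : Fin n // v ∈ H}, (∑ t ∈ Hᶜ, A ↑i t) * (z i * z i) := by
    rw [dotProduct,
      hsum1 (fun v => x v * (lap A *ᵥ x) v) (fun v hv => by show x v * (lap A *ᵥ x) v = 0; rw [hxnot v hv, zero_mul])]
    rw [dotProduct, ← Finset.sum_add_distrib]
    refine Finset.sum_congr rfl fun i _ => ?_
    rw [lap_mulVec A hdiag x ↑i, lap_mulVec (subW A H) hdH z i, hxH i, hinner i, hrowsum i]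
    ring
  have hAx : lam2 * (x ⬝ᵥ x) ≤ x ⬝ᵥ (lap A *ᵥ x) := specA x hperp
  have hMz : z ⬝ᵥ (lap (subW A H) *ᵥ z) = μ * (z ⬝ᵥ z) := by
    rw [hzeig, dotProduct_smul]
    rfl
  have hE : ∑ i : {v : Fin n // v ∈ H}, (∑ t ∈ Hᶜ, A ↑i t) * (z i * z i)
      ≤ (lam2 - τ) * (z ⬝ᵥ z) := by
    rw [dotProduct, Finset.mul_sum]
    exact Finset.sum_le_sum fun i _ =>
      mul_le_mul_of_nonneg_right (hext ↑i i.2) (mul_self_nonneg _)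
  rw [hquad, hxx, hMz] at hAx
  nlinarith [hzz, hlt, hAx, hE]
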